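/- arXiv:math/0409466 — 3 statements merged into one kernel-verified Lean document; each statement's English description precedes it below -/
import Mathlib

section
/- For n ≥ m ≥ k+1 ≥ 4, the join H = K_{m-3} + complement(K_{n-m+3}) does not contain K_m − P_k as a subgraph. -/
open SimpleGraph

/-- The multiset of vertex degrees of a finite simple graph. -/
noncomputable def degMS {V : Type*} (G : SimpleGraph V) [Fintype V] : Multiset ℕ :=
  Finset.univ.val.map fun v => Nat.card (G.neighborSet v)

/-- `Contains G H` : `G` contains a copy of `H` as a subgraph. -/
def Contains {V W : Type*} (G : SimpleGraph V) (H : SimpleGraph W) : Prop :=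
  ∃ f : W ↪ V, ∀ a b, H.Adj a b → G.Adj (f a) (f b)

/-- `K_m - P_k` : the complete graph on `m` vertices minus the `k` edges of a path
on the vertices `0, 1, ..., k`. -/
def KmPk (m k : ℕ) : SimpleGraph (Fin m) :=
  ⊤ \ SimpleGraph.fromRel (fun i j => (i : ℕ) + 1 = (j : ℕ) ∧ (j : ℕ) ≤ k)

/-- The join `K_{m-3} + complement (K_{n-m+3})` realized on `Fin n`:
the first `m-3` vertices form a clique joined to all remaining vertices. -/
def joinH (n m : ℕ) : SimpleGraph (Fin n) :=
  SimpleGraph.fromRel (fun i _ => (i : ℕ) < m - 3)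

/-! Three vertices missed by the clique part of `joinH n m` would have to be pairwise
non-adjacent in `K_m - P_k`, i.e. pairwise consecutive on the path, which is impossible.
Since the clique part has only `m - 3` vertices, some three vertices of `K_m - P_k` are
missed by any embedding. -/

open Finset

theorem Contains.not_of_isIndepSet {V W : Type*} [Fintype V] [Fintype W] [DecidableEq V]
    {G : SimpleGraph V} {H : SimpleGraph W} {r : ℕ} (hH : H.IndepSetFree r)
    {s : Finset V} (hs : G.IsIndepSet s) (hcard : #sᶜ + r ≤ Fintype.card W) :
    ¬ Contains G H := by
  classical
  rintro ⟨f, hf⟩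
  set t := univ.filter (fun w => f w ∈ s)
  have htc : #tᶜ ≤ #sᶜ :=
    card_le_card_of_injOn f (fun w hw => by simpa [t] using hw) f.injective.injOn
  have ht : r ≤ #t := by
    rw [card_compl] at htc
    have := card_le_univ t
    omega
  obtain ⟨u, hut, hu⟩ := exists_subset_card_eq ht
  refine hH u ⟨fun a ha b hb hab hadj => ?_, hu⟩
  have ha' : f a ∈ s := (mem_filter.mp (hut ha)).2
  have hb' : f b ∈ s := (mem_filter.mp (hut hb)).2
  exact hs ha' hb' (f.injective.ne hab) (hf a b hadj)

theorem KmPk_consecutive_of_not_adj {m k : ℕ} {a b : Fin m} (hab : a ≠ b)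
    (h : ¬ (KmPk m k).Adj a b) : (a : ℕ) + 1 = b ∨ (b : ℕ) + 1 = a := by
  simp only [KmPk, sdiff_adj, top_adj, fromRel_adj, not_and] at h
  omega

theorem KmPk_indepSetFree_three (m k : ℕ) : (KmPk m k).IndepSetFree 3 := by
  intro t ht
  obtain ⟨a, b, c, hab, hac, hbc, rfl⟩ := card_eq_three.mp ht.card_eq
  have hind := ht.isIndepSet
  have h₁ := KmPk_consecutive_of_not_adj hab (hind (by simp) (by simp) hab)
  have h₂ := KmPk_consecutive_of_not_adj hac (hind (by simp) (by simp) hac)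
  have h₃ := KmPk_consecutive_of_not_adj hbc (hind (by simp) (by simp) hbc)
  omega

theorem joinH_isIndepSet (n m : ℕ) :
    (joinH n m).IsIndepSet ↑(univ.filter fun i : Fin n => m - 3 ≤ i) := by
  intro a ha b hb _ hadj
  simp only [coe_filter, mem_univ, true_and, Set.mem_ofPred_eq] at ha hb
  simp only [joinH, fromRel_adj] at hadj
  omega

theorem Fin.card_compl_filter_le_le (n c : ℕ) :
    #(univ.filter fun i : Fin n => c ≤ i)ᶜ ≤ c := by
  simpa using card_le_card_of_injOn (t := range c) (fun i : Fin n => (i : ℕ))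
    (fun i hi => by simp at hi ⊢; omega) (Fin.val_injective.injOn)

theorem stmt1_general (n m k : ℕ) (hk : 4 ≤ k + 1) (hm : k + 1 ≤ m) :
    ¬ Contains (joinH n m) (KmPk m k) := by
  refine Contains.not_of_isIndepSet (KmPk_indepSetFree_three m k) (joinH_isIndepSet n m) ?_
  have := Fin.card_compl_filter_le_le n (m - 3)
  rw [Fintype.card_fin]
  omega

theorem stmt1 (n m k : ℕ) (hk : 4 ≤ k + 1) (hm : k + 1 ≤ m) (hn : m ≤ n) :
    ¬ Contains (joinH n m) (KmPk m k) :=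
  stmt1_general n m k hk hm
end

section
/- For every n ≥ 5, the sequence consisting of one term n−1 followed by n−1 terms equal to 3 is graphical only if n is even or n−1 is even appropriately (degree sum even), and when graphical it has a realization containing K_5 − P_3 as a subgraph. -/
open SimpleGraph

/-!
Graphical sequences have even sum by the handshake lemma. Conversely the wheel, a hub joined
to every vertex of an `(n - 1)`-cycle, realizes `((n - 1)^1, 3^(n - 1))`. It contains
`K_5 - P_3`, which is the cone over the path `P_4`, because `P_4 ⊆ C_(n-1)` once `n ≥ 5`.
-/

namespace SimpleGraph

theorem degMS_eq_map_degree {V : Type*} [Fintype V] (G : SimpleGraph V) [DecidableRel G.Adj] :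
    degMS G = Finset.univ.val.map fun v => G.degree v := by
  simp only [degMS, Nat.card_eq_fintype_card, card_neighborSet_eq_degree]

theorem even_sum_degMS {V : Type*} [Fintype V] (G : SimpleGraph V) : Even (degMS G).sum := by
  classical
  rw [degMS_eq_map_degree, ← Finset.sum_eq_multiset_sum, sum_degrees_eq_twice_card_edges]
  exact even_two_mul _

theorem degMS_eq_cons {m : ℕ} (G : SimpleGraph (Fin (m + 1))) [DecidableRel G.Adj] :
    degMS G = G.degree 0 ::ₘ Finset.univ.val.map fun a : Fin m => G.degree a.succ := by
  rw [degMS_eq_map_degree, Fin.univ_succ]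
  simp only [Finset.cons_val, Multiset.map_cons, Finset.map_val, Multiset.map_map]
  rfl

variable {m : ℕ} (H : SimpleGraph (Fin m))

/-- The apex `0` is joined to every vertex, and `H` sits on `1, …, m` via `Fin.succ`. -/
def cone : SimpleGraph (Fin (m + 1)) :=
  fromRel fun i j => Fin.cases True (fun a => Fin.cases False (H.Adj a) j) i

variable {H} in
instance [DecidableRel H.Adj] : DecidableRel (cone H).Adj := fun i j => by
  rw [cone, fromRel_adj]
  cases i using Fin.cases <;> cases j using Fin.cases <;>
    simp only [Fin.cases_zero, Fin.cases_succ] <;> infer_instance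

@[simp] theorem cone_adj_zero_succ (a : Fin m) : (cone H).Adj 0 a.succ := by
  simp [cone, (Fin.succ_ne_zero a).symm]

@[simp] theorem cone_adj_succ_zero (a : Fin m) : (cone H).Adj a.succ 0 :=
  (cone_adj_zero_succ H a).symm

@[simp] theorem cone_adj_succ_succ {a b : Fin m} : (cone H).Adj a.succ b.succ ↔ H.Adj a b := by
  simp only [cone, fromRel_adj, ne_eq, Fin.succ_inj, Fin.cases_succ]
  exact ⟨fun ⟨_, h⟩ => h.elim id fun h => h.symm, fun h => ⟨h.ne, Or.inl h⟩⟩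

theorem cone_degree_zero [DecidableRel (cone H).Adj] : (cone H).degree 0 = m := by
  have : (cone H).neighborFinset 0 = Finset.univ.erase 0 := by
    ext j
    cases j using Fin.cases <;> simp
  rw [degree, this, Finset.card_erase_of_mem (Finset.mem_univ _), Finset.card_univ,
    Fintype.card_fin, Nat.add_sub_cancel]

theorem cone_degree_succ [DecidableRel H.Adj] [DecidableRel (cone H).Adj] (a : Fin m) :
    (cone H).degree a.succ = H.degree a + 1 := by
  have : (cone H).neighborFinset a.succ =
      Finset.cons 0 ((H.neighborFinset a).map (Fin.succEmb m)) (by simp [Fin.succ_ne_zero]) := by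
    ext j
    cases j using Fin.cases <;> simp
  rw [degree, this, Finset.card_cons, Finset.card_map, degree]

theorem degMS_cone [DecidableRel H.Adj] {d : ℕ} (hH : H.IsRegularOfDegree d) :
    degMS (cone H) = m ::ₘ Multiset.replicate m (d + 1) := by
  simp [degMS_eq_cons, cone_degree_zero, cone_degree_succ, hH.degree_eq]

theorem IsContained.cone {m' : ℕ} {H' : SimpleGraph (Fin m')} (h : H ⊑ H') :
    cone H ⊑ cone H' := by
  obtain ⟨f⟩ := h
  let g : Fin (m + 1) → Fin (m' + 1) := Fin.cases 0 fun a => (f a).succ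
  refine ⟨⟨⟨g, fun {i j} hij => ?_⟩, fun i j hij => ?_⟩⟩
  · cases i using Fin.cases <;> cases j using Fin.cases <;> simp_all [g]
    exact f.toHom.map_adj hij
  · cases i using Fin.cases <;> cases j using Fin.cases <;> simp_all [g, (Fin.succ_ne_zero _).symm]
    exact f.injective hij

theorem cycleGraph_isRegularOfDegree_two (hm : 3 ≤ m) :
    (cycleGraph m).IsRegularOfDegree 2 := by
  obtain ⟨k, rfl⟩ := Nat.exists_eq_add_of_le' hm
  exact fun _ => cycleGraph_degree_three_le

instance : DecidableRel (pathGraph m).Adj := fun _ _ => decidable_of_iff' _ pathGraph_adj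

theorem pathGraph_isContained_cycleGraph {k : ℕ} (h : k ≤ m) : pathGraph k ⊑ cycleGraph m :=
  IsContained.mono_right
    ⟨⟨⟨Fin.castLE h, fun hab => by simpa [pathGraph_adj] using hab⟩, Fin.castLE_injective h⟩⟩
    pathGraph_le_cycleGraph

/-- The missing path `0 - 1 - 2 - 3` of `KmPk 5 3` goes to the non-edges `3 - 1 - 4 - 2` of the
cone over the path `1 - 2 - 3 - 4`, and the universal vertex `4` to the apex. -/
theorem kmPk_five_three_isContained_cone_pathGraph : KmPk 5 3 ⊑ cone (pathGraph 4) :=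
  ⟨Hom.toCopy ⟨![3, 1, 4, 2, 0], by unfold KmPk; decide⟩ (by decide)⟩

theorem contains_of_isContained {V W : Type*} {G : SimpleGraph V} {H : SimpleGraph W}
    (h : H ⊑ G) : Contains G H :=
  let ⟨f⟩ := h
  ⟨⟨f, f.injective⟩, fun _ _ => f.toHom.map_adj⟩

end SimpleGraph

theorem stmt7 (n : ℕ) (hn : 5 ≤ n) :
    ((∃ G : SimpleGraph (Fin n), degMS G = (n - 1) ::ₘ Multiset.replicate (n - 1) 3) →
      Even ((n - 1) ::ₘ Multiset.replicate (n - 1) 3).sum) ∧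
    ((∃ G : SimpleGraph (Fin n), degMS G = (n - 1) ::ₘ Multiset.replicate (n - 1) 3) →
      ∃ G : SimpleGraph (Fin n),
        degMS G = (n - 1) ::ₘ Multiset.replicate (n - 1) 3 ∧ Contains G (KmPk 5 3)) := by
  obtain ⟨m, rfl⟩ : ∃ m, n = m + 1 := ⟨n - 1, by omega⟩
  refine ⟨fun ⟨G, hG⟩ => hG ▸ even_sum_degMS G, fun _ => ⟨cone (cycleGraph m), ?_, ?_⟩⟩
  · exact degMS_cone _ (cycleGraph_isRegularOfDegree_two (by omega))
  · exact contains_of_isContained <| kmPk_five_three_isContained_cone_pathGraph.trans <|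
      (pathGraph_isContained_cycleGraph (by omega)).cone
end

section
/- If G is a simple graph on n ≥ 8 vertices with minimum degree at least 3 containing K_4 on vertices v1,v2,v3,v4, where v1 has a neighbor y1 ∉ {v2,v3,v4} nonadjacent to v2,v3,v4, v2 has a neighbor y2 ∉ {v1,v3,v4} nonadjacent to v1,v3,v4, and y1 has a neighbor y3 with y3 not adjacent to v1, then the graph G' obtained by deleting edges y1y3, v1v4, v2y2 and adding edges y1v2, y3v1, y2v4 is a simple graph with the same degree sequence as G and contains K_5 − P_3 as a subgraph. -/
open SimpleGraph

/-!
The six vertices `y1, y3, v1, v4, y2, v2` form a closed walk alternating between removed edges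
and added non-edges, so each of them trades exactly one neighbour for a new one and all degrees
are preserved. For `K_5 − P_3` take `v1, v4, y1, v3, v2`: the new edge `y1v2` makes `v2`
adjacent to the other four, and among those only the path `v1 v4 y1 v3` is missing.
-/

namespace SimpleGraph

variable {V : Type*} (G : SimpleGraph V) (R A : Set (Sym2 V))

def edgeSwitch : SimpleGraph V := (G \ fromEdgeSet R) ⊔ fromEdgeSet A

variable {G R A}

@[simp]
lemma edgeSwitch_adj {v w : V} :
    (G.edgeSwitch R A).Adj v w ↔ G.Adj v w ∧ s(v, w) ∉ R ∨ s(v, w) ∈ A ∧ v ≠ w := by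
  simp only [edgeSwitch, sup_adj, sdiff_adj, fromEdgeSet_adj]
  grind [Adj.ne]

lemma edgeSwitch_adj_of_adj {v w : V} (h : G.Adj v w) (hR : s(v, w) ∉ R) :
    (G.edgeSwitch R A).Adj v w :=
  edgeSwitch_adj.2 (Or.inl ⟨h, hR⟩)

lemma edgeSwitch_adj_of_mem {v w : V} (hA : s(v, w) ∈ A) (hvw : v ≠ w) :
    (G.edgeSwitch R A).Adj v w :=
  edgeSwitch_adj.2 (Or.inr ⟨hA, hvw⟩)

lemma neighborSet_edgeSwitch_of_forall_notMem {v : V} (hR : ∀ w, s(v, w) ∉ R)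
    (hA : ∀ w, s(v, w) ∉ A) : (G.edgeSwitch R A).neighborSet v = G.neighborSet v := by
  ext w
  simp [hR, hA]

lemma neighborSet_edgeSwitch_of_exchange {v a b : V} (hR : ∀ w, s(v, w) ∈ R ↔ w = a)
    (hA : ∀ w, s(v, w) ∈ A ↔ w = b) (hvb : v ≠ b) :
    (G.edgeSwitch R A).neighborSet v = insert b (G.neighborSet v \ {a}) := by
  ext w
  by_cases hwb : w = b
  · subst hwb
    simp [hA, hvb]
  · simp [hR, hA, hwb]

lemma card_neighborSet_edgeSwitch_of_exchange {v a b : V} (hR : ∀ w, s(v, w) ∈ R ↔ w = a)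
    (hA : ∀ w, s(v, w) ∈ A ↔ w = b) (ha : G.Adj v a) (hb : ¬ G.Adj v b) (hvb : v ≠ b) :
    Nat.card ((G.edgeSwitch R A).neighborSet v) = Nat.card (G.neighborSet v) := by
  rw [neighborSet_edgeSwitch_of_exchange hR hA hvb, Nat.card_coe_set_eq, Nat.card_coe_set_eq]
  exact Set.ncard_exchange (s := G.neighborSet v) hb ha

end SimpleGraph

open SimpleGraph

lemma degMS_eq_of_card_neighborSet_eq {V : Type*} [Fintype V] {G G' : SimpleGraph V}
    (h : ∀ v, Nat.card (G'.neighborSet v) = Nat.card (G.neighborSet v)) :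
    degMS G' = degMS G :=
  Multiset.map_congr rfl fun v _ => h v

/-- The switched edges form the alternating hexagon `a b c d f e`. -/
theorem degMS_edgeSwitch_hexagon {V : Type*} [Fintype V] (G : SimpleGraph V) {a b c d e f : V}
    (hnd : [a, b, c, d, e, f].Nodup) (hab : G.Adj a b) (hcd : G.Adj c d) (hef : G.Adj e f)
    (hae : ¬ G.Adj a e) (hbc : ¬ G.Adj b c) (hfd : ¬ G.Adj f d) :
    degMS (G.edgeSwitch {s(a, b), s(c, d), s(e, f)} {s(a, e), s(b, c), s(f, d)}) = degMS G := by
  simp only [List.nodup_cons, List.mem_cons, List.not_mem_nil, or_false, not_or] at hnd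
  obtain ⟨⟨hab', hac, had, hae', haf⟩, ⟨hbc', hbd, hbe, hbf⟩, ⟨hcd', hce, hcf⟩, ⟨hde, hdf⟩,
    hef', -⟩ := hnd
  refine degMS_eq_of_card_neighborSet_eq fun v => ?_
  by_cases hva : v = a
  · subst hva
    exact card_neighborSet_edgeSwitch_of_exchange (by simp [*]) (by simp [*]) hab hae hae'
  by_cases hvb : v = b
  · subst hvb
    exact card_neighborSet_edgeSwitch_of_exchange (by simp [*]) (by simp [*]) hab.symm hbc hbc'
  by_cases hvc : v = c
  · subst hvc
    exact card_neighborSet_edgeSwitch_of_exchange (by simp [*]) (by simp [*]) hcd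
      (fun h => hbc h.symm) (Ne.symm hbc')
  by_cases hvd : v = d
  · subst hvd
    exact card_neighborSet_edgeSwitch_of_exchange (by simp [*]) (by simp [*]) hcd.symm
      (fun h => hfd h.symm) hdf
  by_cases hve : v = e
  · subst hve
    exact card_neighborSet_edgeSwitch_of_exchange (by simp [*]) (by simp [*]) hef
      (fun h => hae h.symm) (Ne.symm hae')
  by_cases hvf : v = f
  · subst hvf
    exact card_neighborSet_edgeSwitch_of_exchange (by simp [*]) (by simp [*]) hef.symm hfd
      (Ne.symm hdf)
  rw [neighborSet_edgeSwitch_of_forall_notMem (by simp [*]) (by simp [*])]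

lemma contains_KmPk_five_three {V : Type*} {G : SimpleGraph V} {x₀ x₁ x₂ x₃ x₄ : V}
    (h01 : x₀ ≠ x₁) (h12 : x₁ ≠ x₂) (h23 : x₂ ≠ x₃)
    (h02 : G.Adj x₀ x₂) (h03 : G.Adj x₀ x₃) (h04 : G.Adj x₀ x₄) (h13 : G.Adj x₁ x₃)
    (h14 : G.Adj x₁ x₄) (h24 : G.Adj x₂ x₄) (h34 : G.Adj x₃ x₄) :
    Contains G (KmPk 5 3) := by
  have hinj : Function.Injective ![x₀, x₁, x₂, x₃, x₄] := by
    intro i j hij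
    fin_cases i <;> fin_cases j <;>
      simp_all [h02.ne, h03.ne, h04.ne, h13.ne, h14.ne, h24.ne, h34.ne, eq_comm]
  refine ⟨⟨_, hinj⟩, fun i j hij => ?_⟩
  fin_cases i <;> fin_cases j <;> simp_all [KmPk, G.adj_comm]

theorem stmt13_general {V : Type*} [Fintype V] (G : SimpleGraph V)
    (v1 v2 v3 v4 y1 y2 y3 : V)
    (h12 : G.Adj v1 v2) (h13 : G.Adj v1 v3) (h14 : G.Adj v1 v4)
    (h23 : G.Adj v2 v3) (h24 : G.Adj v2 v4) (h34 : G.Adj v3 v4)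
    (hy1 : G.Adj v1 y1) (hy1d : y1 ≠ v2 ∧ y1 ≠ v3 ∧ y1 ≠ v4)
    (hy1n : ¬ G.Adj y1 v2 ∧ ¬ G.Adj y1 v3 ∧ ¬ G.Adj y1 v4)
    (hy2 : G.Adj v2 y2) (hy2d : y2 ≠ v1 ∧ y2 ≠ v3 ∧ y2 ≠ v4)
    (hy2n : ¬ G.Adj y2 v1 ∧ ¬ G.Adj y2 v3 ∧ ¬ G.Adj y2 v4)
    (hy3 : G.Adj y1 y3) (hy3n1 : ¬ G.Adj y3 v1)
    (hy3d : y3 ≠ v1 ∧ y3 ≠ v2 ∧ y3 ≠ v3 ∧ y3 ≠ v4)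
    (hyd : y1 ≠ y2 ∧ y1 ≠ y3 ∧ y2 ≠ y3) :
    degMS ((G \ SimpleGraph.fromEdgeSet {s(y1, y3), s(v1, v4), s(v2, y2)}) ⊔
        SimpleGraph.fromEdgeSet {s(y1, v2), s(y3, v1), s(y2, v4)}) = degMS G ∧
    Contains ((G \ SimpleGraph.fromEdgeSet {s(y1, y3), s(v1, v4), s(v2, y2)}) ⊔
        SimpleGraph.fromEdgeSet {s(y1, v2), s(y3, v1), s(y2, v4)}) (KmPk 5 3) := by
  refine ⟨degMS_edgeSwitch_hexagon G ?_ hy3 h14 hy2 hy1n.1 hy3n1 hy2n.2.2,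
    contains_KmPk_five_three (x₀ := v1) (x₁ := v4) (x₂ := y1) (x₃ := v3) (x₄ := v2)
      h14.ne (Ne.symm hy1d.2.2) hy1d.2.1
      (edgeSwitch_adj_of_adj hy1 ?_) (edgeSwitch_adj_of_adj h13 ?_)
      (edgeSwitch_adj_of_adj h12 ?_) (edgeSwitch_adj_of_adj h34.symm ?_)
      (edgeSwitch_adj_of_adj h24.symm ?_) (edgeSwitch_adj_of_mem (by simp) hy1d.1)
      (edgeSwitch_adj_of_adj h23.symm ?_)⟩
  -- left: the hexagon's vertices are distinct, and none of the kept edges of `G` was removed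
  all_goals
    simp only [List.nodup_cons, List.mem_cons, List.not_mem_nil, Set.mem_insert_iff,
      Set.mem_singleton_iff, Sym2.eq_iff]
    grind [SimpleGraph.Adj.ne]

theorem stmt13 {V : Type*} [Fintype V] (G : SimpleGraph V) (hn : 8 ≤ Fintype.card V)
    (hmin : ∀ v : V, 3 ≤ Nat.card (G.neighborSet v))
    (v1 v2 v3 v4 y1 y2 y3 : V)
    (h12 : G.Adj v1 v2) (h13 : G.Adj v1 v3) (h14 : G.Adj v1 v4)
    (h23 : G.Adj v2 v3) (h24 : G.Adj v2 v4) (h34 : G.Adj v3 v4)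
    (hy1 : G.Adj v1 y1) (hy1d : y1 ≠ v2 ∧ y1 ≠ v3 ∧ y1 ≠ v4)
    (hy1n : ¬ G.Adj y1 v2 ∧ ¬ G.Adj y1 v3 ∧ ¬ G.Adj y1 v4)
    (hy2 : G.Adj v2 y2) (hy2d : y2 ≠ v1 ∧ y2 ≠ v3 ∧ y2 ≠ v4)
    (hy2n : ¬ G.Adj y2 v1 ∧ ¬ G.Adj y2 v3 ∧ ¬ G.Adj y2 v4)
    (hy3 : G.Adj y1 y3) (hy3n1 : ¬ G.Adj y3 v1)
    (hy3d : y3 ≠ v1 ∧ y3 ≠ v2 ∧ y3 ≠ v3 ∧ y3 ≠ v4)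
    (hyd : y1 ≠ y2 ∧ y1 ≠ y3 ∧ y2 ≠ y3) :
    degMS ((G \ SimpleGraph.fromEdgeSet {s(y1, y3), s(v1, v4), s(v2, y2)}) ⊔
        SimpleGraph.fromEdgeSet {s(y1, v2), s(y3, v1), s(y2, v4)}) = degMS G ∧
    Contains ((G \ SimpleGraph.fromEdgeSet {s(y1, y3), s(v1, v4), s(v2, y2)}) ⊔
        SimpleGraph.fromEdgeSet {s(y1, v2), s(y3, v1), s(y2, v4)}) (KmPk 5 3) :=
  stmt13_general G v1 v2 v3 v4 y1 y2 y3 h12 h13 h14 h23 h24 h34 hy1 hy1d hy1n hy2 hy2d hy2n hy3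
    hy3n1 hy3d hyd
end
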